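/- With H_J defined recursively from {L_J} via H_∅ := E and H_J := (I − Σ_{J'⊂J} H_{J'}) ∘ L_J: if {H_J} satisfies Lean Decomposability (P3) (for g ∈ V_J, Σ_{J'⊆J} H_{J'}(g) = g), then {L_J} satisfies (P3)*: for g ∈ V_J, ∂(L_J(g) − g)/∂x_J = 0. -/

import Mathlib

open Finset MeasureTheory

variable {ι : Type*} [DecidableEq ι] {X : ι → Type*}

/-- Substitute the values `a i` into the coordinates `i ∈ J` of the point `x`. -/
def substPt (J : Finset ι) (a x : ∀ i, X i) : ∀ i, X i :=
  fun i => if i ∈ J then a i else x i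

/-- The substitution operator `g ↦ g |_{x_J = a_J}`. -/
def substOp (J : Finset ι) (a : ∀ i, X i) (g : (∀ i, X i) → ℝ) : (∀ i, X i) → ℝ :=
  fun x => g (substPt J a x)

/-- The partial difference operator `ⱼΔ_{a_j} g = g - g|_{x_j = a_j}`. -/
def deltaOp (j : ι) (a : ∀ i, X i) (g : (∀ i, X i) → ℝ) : (∀ i, X i) → ℝ :=
  g - substOp {j} a g

/-- The composed partial difference operator `_JΔ_{a_J}`, in its
inclusion-exclusion form `∑_{K ⊆ J} (-1)^|K| g|_{x_K = a_K}`. -/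
def pdiff (J : Finset ι) (a : ∀ i, X i) (g : (∀ i, X i) → ℝ) : (∀ i, X i) → ℝ :=
  ∑ K ∈ J.powerset, ((-1 : ℝ) ^ K.card) • substOp K a g

/-- `∂g/∂x_J = 0` : all composed partial differences over `J` vanish. -/
def PDiffZero (J : Finset ι) (g : (∀ i, X i) → ℝ) : Prop :=
  ∀ a : ∀ i, X i, pdiff J a g = 0

/-- `g ∈ V_K` : `g` depends only on the coordinates in `K`. -/
def DependsOnCoords (K : Finset ι) (g : (∀ i, X i) → ℝ) : Prop :=
  ∀ x y : ∀ i, X i, (∀ i ∈ K, x i = y i) → g x = g y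

lemma dependsOn_mono {K K' : Finset ι} (h : K ⊆ K') {g : (∀ i, X i) → ℝ}
    (hg : DependsOnCoords K g) : DependsOnCoords K' g :=
  fun x y hxy => hg x y fun i hi => hxy i (h hi)

lemma dependsOn_sub {K : Finset ι} {f g : (∀ i, X i) → ℝ}
    (hf : DependsOnCoords K f) (hg : DependsOnCoords K g) : DependsOnCoords K (f - g) := by
  intro x y h
  simp only [Pi.sub_apply, hf x y h, hg x y h]

lemma dependsOn_sum {α : Type*} {K : Finset ι} {s : Finset α} {f : α → (∀ i, X i) → ℝ}
    (h : ∀ i ∈ s, DependsOnCoords K (f i)) : DependsOnCoords K (∑ i ∈ s, f i) := by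
  intro x y hxy
  simp only [Finset.sum_apply]
  exact Finset.sum_congr rfl fun i hi => h i hi x y hxy

/-- Killing lemma: if `g` depends only on `K` and `J` contains a coordinate outside `K`,
then all composed partial differences over `J` of `g` vanish. -/
lemma pdiff_eq_zero_of_dependsOn {J K : Finset ι} {j : ι} (hjJ : j ∈ J) (hjK : j ∉ K)
    {g : (∀ i, X i) → ℝ} (hg : DependsOnCoords K g) (a : ∀ i, X i) : pdiff J a g = 0 := by
  funext x
  have hJ : insert j (J.erase j) = J := Finset.insert_erase hjJ
  simp only [pdiff, Finset.sum_apply, Pi.smul_apply, smul_eq_mul, Pi.zero_apply]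
  rw [← hJ, Finset.sum_powerset_insert (Finset.notMem_erase j J)]
  have key : ∀ t ∈ (J.erase j).powerset,
      ((-1 : ℝ) ^ (insert j t).card) * substOp (insert j t) a g x
        = -(((-1 : ℝ) ^ t.card) * substOp t a g x) := by
    intro t ht
    have hjt : j ∉ t := fun hj =>
      Finset.notMem_erase j J ((Finset.mem_powerset.mp ht) hj)
    have hcard : (insert j t).card = t.card + 1 := Finset.card_insert_of_notMem hjt
    have hsub : substOp (insert j t) a g x = substOp t a g x := by
      apply hg
      intro i hiK
      have hij : i ≠ j := fun h => hjK (h ▸ hiK)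
      simp [substPt, Finset.mem_insert, hij]
    rw [hcard, hsub, pow_succ]
    ring
  rw [Finset.sum_congr rfl key, Finset.sum_neg_distrib, add_neg_cancel]

/-- if the recursively defined `{H_J}` satisfies Lean
Decomposability (P3), then `{L_J}` satisfies (P3)*. -/
theorem stmt10
    (E : ((∀ i, X i) → ℝ) →ₗ[ℝ] ((∀ i, X i) → ℝ))
    (hEconst : ∀ g : (∀ i, X i) → ℝ, DependsOnCoords (∅ : Finset ι) (E g))
    (hEfix : ∀ c : ℝ, E (fun _ => c) = fun _ => c)
    (L : Finset ι → ((∀ i, X i) → ℝ) →ₗ[ℝ] ((∀ i, X i) → ℝ))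
    (hL : ∀ J : Finset ι, J.Nonempty → ∀ g : (∀ i, X i) → ℝ, DependsOnCoords J (L J g))
    (H : Finset ι → ((∀ i, X i) → ℝ) →ₗ[ℝ] ((∀ i, X i) → ℝ))
    (hH0 : H ∅ = E)
    (hHrec : ∀ J : Finset ι, J.Nonempty → ∀ g : (∀ i, X i) → ℝ,
      H J g = L J g - ∑ J' ∈ J.powerset.erase J, H J' (L J g))
    (hP3 : ∀ (J : Finset ι) (g : (∀ i, X i) → ℝ), DependsOnCoords J g →
      ∑ J' ∈ J.powerset, H J' g = g) :
    ∀ J : Finset ι, J.Nonempty → ∀ g : (∀ i, X i) → ℝ,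
      DependsOnCoords J g → PDiffZero J (L J g - g) := by
  -- Every `H J'` lands in `V_{J'}`.
  have hHdep : ∀ J' : Finset ι, ∀ h : (∀ i, X i) → ℝ, DependsOnCoords J' (H J' h) := by
    intro J'
    induction J' using Finset.strongInduction with
    | _ J' ih =>
      intro h
      rcases J'.eq_empty_or_nonempty with rfl | hne
      · rw [hH0]; exact hEconst h
      · rw [hHrec J' hne h]
        refine dependsOn_sub (hL J' hne h) (dependsOn_sum ?_)
        intro J'' hJ''
        simp only [Finset.mem_erase, Finset.mem_powerset] at hJ''
        exact dependsOn_mono hJ''.2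
          (ih J'' (HasSubset.Subset.ssubset_of_ne hJ''.2 hJ''.1) _)
  intro J hJne g hg a
  -- Express `L J g - g` as a sum of terms each depending on a proper subset of `J`.
  have hdecomp : L J g - g
      = ∑ J' ∈ J.powerset.erase J, (H J' (L J g) - H J' g) := by
    have h1 : ∑ J' ∈ J.powerset, H J' g = g := hP3 J g hg
    have h2 : H J g + ∑ J' ∈ J.powerset.erase J, H J' g = g :=
      (Finset.add_sum_erase J.powerset (fun J' => H J' g)
        (Finset.mem_powerset_self J)).trans h1
    have h3 : H J g = L J g - ∑ J' ∈ J.powerset.erase J, H J' (L J g) :=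
      hHrec J hJne g
    rw [Finset.sum_sub_distrib]
    nth_rewrite 2 [← h2]
    rw [h3]
    abel
  rw [hdecomp]
  -- pdiff of the sum is the sum of pdiffs, and each vanishes.
  funext x
  have hsubst : ∀ K : Finset ι,
      substOp K a (∑ J' ∈ J.powerset.erase J, (H J' (L J g) - H J' g)) x
        = ∑ J' ∈ J.powerset.erase J, substOp K a (H J' (L J g) - H J' g) x := by
    intro K; simp [substOp, Finset.sum_apply]
  simp only [pdiff, Finset.sum_apply, Pi.smul_apply, smul_eq_mul, Pi.zero_apply, hsubst,
    Finset.mul_sum]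
  rw [Finset.sum_comm]
  refine Finset.sum_eq_zero fun J' hJ' => ?_
  simp only [Finset.mem_erase, Finset.mem_powerset] at hJ'
  obtain ⟨j, hjJ, hjJ'⟩ := Finset.exists_of_ssubset
    (HasSubset.Subset.ssubset_of_ne hJ'.2 hJ'.1)
  have hdep : DependsOnCoords J' (H J' (L J g) - H J' g) :=
    dependsOn_sub (hHdep J' _) (hHdep J' _)
  have hz := pdiff_eq_zero_of_dependsOn hjJ hjJ' hdep a
  have hzx := congrFun hz x
  simpa [pdiff, Finset.sum_apply, Pi.smul_apply, smul_eq_mul] using hzx
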